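/- Let C be a finite set of colors with injective priority p : C → ℝ, partitioned into C₀ and C₁ such that every color in C₀ has smaller priority than every color in C₁. Let S ⊆ C and K a positive integer. If |S ∩ C₁| ≥ K, then the top-K colors of S equal the top-K colors of S ∩ C₁. If m = |S ∩ C₁| < K, then the top-K colors of S equal (S ∩ C₁) ∪ (top-(K−m) colors of S ∩ C₀). -/
import Mathlib


/-- `T` is the set of `K` highest-priority colors of `S` (all of `S` if `|S| < K`). -/
def IsTopK {C : Type*} [DecidableEq C] (p : C → ℝ) (K : ℕ) (S T : Finset C) : Prop :=
  T ⊆ S ∧ T.card = min K S.card ∧ ∀ x ∈ T, ∀ y ∈ S \ T, p y < p x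

lemma IsTopK_unique {C : Type*} [DecidableEq C] (p : C → ℝ) (K : ℕ) (S T T' : Finset C)
    (h : IsTopK p K S T) (h' : IsTopK p K S T') : T = T' := by
  obtain ⟨hsub, hcard, hcmp⟩ := h
  obtain ⟨hsub', hcard', hcmp'⟩ := h'
  apply Finset.eq_of_subset_of_card_le _ (by omega)
  intro x hx
  by_contra hx'
  have hne : (T' \ T).Nonempty := by
    rw [Finset.sdiff_nonempty]
    intro hsub2
    have heq : T' = T := Finset.eq_of_subset_of_card_le hsub2 (by omega)
    exact hx' (heq ▸ hx)
  obtain ⟨y, hy⟩ := hne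
  rw [Finset.mem_sdiff] at hy
  have h1 : p y < p x := hcmp x hx y (Finset.mem_sdiff.mpr ⟨hsub' hy.1, hy.2⟩)
  have h2 : p x < p y := hcmp' y hy.1 x (Finset.mem_sdiff.mpr ⟨hsub hx, hx'⟩)
  linarith

/-- Correctness of the wavelet-tree descent: with colors partitioned into a low
part `C₀` and a high part `C₁`, if `|S ∩ C₁| ≥ K` the top-`K` of `S` are the
top-`K` of `S ∩ C₁`; otherwise they are `S ∩ C₁` together with the
top-`(K - |S ∩ C₁|)` of `S ∩ C₀`. -/
theorem topK_wavelet_descent {C : Type*} [DecidableEq C] (p : C → ℝ)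
    (hp : Function.Injective p) (C₀ C₁ S : Finset C)
    (hdisj : Disjoint C₀ C₁)
    (hlt : ∀ c₀ ∈ C₀, ∀ c₁ ∈ C₁, p c₀ < p c₁)
    (hS : S ⊆ C₀ ∪ C₁) (K : ℕ) (hK : 0 < K)
    (T T₁ T₀ : Finset C) (hT : IsTopK p K S T) :
    (K ≤ (S ∩ C₁).card → IsTopK p K (S ∩ C₁) T₁ → T = T₁) ∧
    ((S ∩ C₁).card < K →
      IsTopK p (K - (S ∩ C₁).card) (S ∩ C₀) T₀ → T = (S ∩ C₁) ∪ T₀) := by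
  have hcardS : S.card = (S ∩ C₀).card + (S ∩ C₁).card := by
    have hU : (S ∩ C₀) ∪ (S ∩ C₁) = S := by
      rw [← Finset.inter_union_distrib_left]
      exact Finset.inter_eq_left.mpr hS
    have hd : Disjoint (S ∩ C₀) (S ∩ C₁) :=
      (hdisj.mono Finset.inter_subset_right Finset.inter_subset_right)
    rw [← Finset.card_union_of_disjoint hd, hU]
  constructor
  · intro hKle h₁
    refine IsTopK_unique p K S T T₁ hT ?_
    obtain ⟨hsub, hcard, hcmp⟩ := h₁
    refine ⟨hsub.trans Finset.inter_subset_left, ?_, ?_⟩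
    · have : (S ∩ C₁).card ≤ S.card := Finset.card_le_card Finset.inter_subset_left
      omega
    · intro x hx y hy
      rw [Finset.mem_sdiff] at hy
      rcases Finset.mem_union.mp (hS hy.1) with h0 | h1
      · have hx1 : x ∈ C₁ := (Finset.mem_inter.mp (hsub hx)).2
        exact hlt y h0 x hx1
      · exact hcmp x hx y (Finset.mem_sdiff.mpr ⟨Finset.mem_inter.mpr ⟨hy.1, h1⟩, hy.2⟩)
  · intro hKlt h₀
    refine IsTopK_unique p K S T _ hT ?_
    obtain ⟨hsub, hcard, hcmp⟩ := h₀
    have hd : Disjoint (S ∩ C₁) T₀ :=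
      (hdisj.symm.mono Finset.inter_subset_right (hsub.trans Finset.inter_subset_right))
    refine ⟨?_, ?_, ?_⟩
    · exact Finset.union_subset Finset.inter_subset_left (hsub.trans Finset.inter_subset_left)
    · rw [Finset.card_union_of_disjoint hd, hcard]
      omega
    · intro x hx y hy
      rw [Finset.mem_sdiff, Finset.mem_union, not_or] at hy
      obtain ⟨hyS, hy1, hy0⟩ := hy
      have hyC0 : y ∈ C₀ := by
        rcases Finset.mem_union.mp (hS hyS) with h0 | h1
        · exact h0
        · exact absurd (Finset.mem_inter.mpr ⟨hyS, h1⟩) hy1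
      rcases Finset.mem_union.mp hx with hx1 | hx0
      · exact hlt y hyC0 x (Finset.mem_inter.mp hx1).2
      · exact hcmp x hx0 y
          (Finset.mem_sdiff.mpr ⟨Finset.mem_inter.mpr ⟨hyS, hyC0⟩, hy0⟩)
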